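/- Under uniform diagonal dominance, the shrinking ambiguity sets collapse to the singleton {P}: if ε_N → 0 and P̂'_N → P' = O⋆P in total variation, then any sequence Q_N with d_TV(O⋆Q_N, P̂'_N) ≤ ε_N satisfies d_TV(Q_N, P) → 0. -/

import Mathlib

/-!
Column `ξ` of `O` has total mass `1` and each off-diagonal entry is at most `O ξ ξ / n`, where
`n = |Ξ|`; hence `(2n - 1) O ξ ξ ≥ n`. Isolating the diagonal term in each row of `O ⋆ f` gives
`‖O ⋆ f‖₁ ≥ ∑ ξ (2 O ξ ξ - 1) |f ξ| ≥ ‖f‖₁ / (2n - 1)`, i.e. `d_TV(Q, P) ≤ (2n - 1) d_TV(O ⋆ Q, O ⋆ P)`.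
Hence `d_TV(Q_N, P) ≤ (2n - 1) (ε_N + d_TV(P̂'_N, O ⋆ P))` by the triangle inequality.
-/

open Finset

namespace DiagDominant

variable {ι : Type*} [Fintype ι]

/-- `O ⋆ p`, where `O j i` stands for `O(j|i)`. -/
def kernelMap (O : ι → ι → ℝ) (p : ι → ℝ) : ι → ℝ := fun j => ∑ i, O j i * p i

noncomputable def tvDist (p q : ι → ℝ) : ℝ := (1 / 2) * ∑ i, |p i - q i|

lemma tvDist_nonneg (p q : ι → ℝ) : 0 ≤ tvDist p q := by
  unfold tvDist
  positivity

lemma tvDist_triangle (p q r : ι → ℝ) : tvDist p r ≤ tvDist p q + tvDist q r := by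
  unfold tvDist
  rw [← mul_add, ← sum_add_distrib]
  gcongr with i
  exact abs_sub_le _ _ _

lemma kernelMap_sub (O : ι → ι → ℝ) (p q : ι → ℝ) :
    kernelMap O (p - q) = kernelMap O p - kernelMap O q := by
  ext j
  simp only [kernelMap, Pi.sub_apply, mul_sub, sum_sub_distrib]

lemma card_le_mul_diag {O : ι → ι → ℝ} {i : ι} (hO_sum : ∑ j, O j i = 1)
    (hdom : ∀ j, j ≠ i → (Fintype.card ι : ℝ) * O j i ≤ O i i) :
    (Fintype.card ι : ℝ) ≤ (2 * Fintype.card ι - 1) * O i i := by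
  classical
  have hcard : ((univ.erase i).card : ℝ) + 1 = Fintype.card ι := by
    exact_mod_cast card_erase_add_one (mem_univ i)
  have hoff : ∑ j ∈ univ.erase i, (Fintype.card ι : ℝ) * O j i ≤ (Fintype.card ι - 1) * O i i :=
    (sum_le_sum fun j hj => hdom j (ne_of_mem_erase hj)).trans_eq
      (by rw [sum_const, nsmul_eq_mul, ← hcard, add_sub_cancel_right])
  rw [← add_sum_erase _ _ (mem_univ i)] at hO_sum
  calc (Fintype.card ι : ℝ) = Fintype.card ι * (O i i + ∑ j ∈ univ.erase i, O j i) := by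
        rw [hO_sum, mul_one]
    _ ≤ (2 * Fintype.card ι - 1) * O i i := by
        rw [mul_add, mul_sum]
        linarith

variable {O : ι → ι → ℝ}

lemma two_mul_diag_sub_le_abs_kernelMap (hO_nonneg : ∀ j i, 0 ≤ O j i) (f : ι → ℝ) (j : ι) :
    2 * O j j * |f j| - ∑ i, O j i * |f i| ≤ |kernelMap O f j| := by
  classical
  have hrest : |∑ i ∈ univ.erase j, O j i * f i| ≤ ∑ i ∈ univ.erase j, O j i * |f i| :=
    (abs_sum_le_sum_abs _ _).trans_eq
      (sum_congr rfl fun i _ => by rw [abs_mul, abs_of_nonneg (hO_nonneg j i)])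
  have hdiag : |O j j * f j| = O j j * |f j| := by rw [abs_mul, abs_of_nonneg (hO_nonneg j j)]
  have hrev := abs_sub_abs_le_abs_add (O j j * f j) (∑ i ∈ univ.erase j, O j i * f i)
  rw [kernelMap, ← add_sum_erase _ _ (mem_univ j), ← add_sum_erase _ _ (mem_univ j)]
  linarith

lemma sum_sum_mul_abs (hO_sum : ∀ i, ∑ j, O j i = 1) (f : ι → ℝ) :
    ∑ j, ∑ i, O j i * |f i| = ∑ i, |f i| := by
  rw [sum_comm]
  simp only [← sum_mul, hO_sum, one_mul]

lemma sum_abs_le_mul_sum_abs_kernelMap (hO_nonneg : ∀ j i, 0 ≤ O j i)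
    (hO_sum : ∀ i, ∑ j, O j i = 1) {c : ℝ} (hc : 0 ≤ c) (hdiag : ∀ i, 1 ≤ c * (2 * O i i - 1))
    (f : ι → ℝ) : ∑ i, |f i| ≤ c * ∑ j, |kernelMap O f j| := by
  have hrows : ∑ i, (2 * O i i - 1) * |f i| ≤ ∑ j, |kernelMap O f j| := by
    calc ∑ i, (2 * O i i - 1) * |f i|
        = ∑ j, 2 * O j j * |f j| - ∑ j, ∑ i, O j i * |f i| := by
          simp only [sum_sum_mul_abs hO_sum, sub_mul, one_mul, sum_sub_distrib]
      _ ≤ ∑ j, |kernelMap O f j| := by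
          rw [← sum_sub_distrib]
          exact sum_le_sum fun j _ => two_mul_diag_sub_le_abs_kernelMap hO_nonneg f j
  calc ∑ i, |f i| ≤ ∑ i, c * ((2 * O i i - 1) * |f i|) :=
        sum_le_sum fun i _ => by
          rw [← mul_assoc]
          exact le_mul_of_one_le_left (abs_nonneg _) (hdiag i)
    _ ≤ c * ∑ j, |kernelMap O f j| := by
        rw [← mul_sum]
        exact mul_le_mul_of_nonneg_left hrows hc

lemma tvDist_le_mul_tvDist_kernelMap (hO_nonneg : ∀ j i, 0 ≤ O j i)
    (hO_sum : ∀ i, ∑ j, O j i = 1) {c : ℝ} (hc : 0 ≤ c) (hdiag : ∀ i, 1 ≤ c * (2 * O i i - 1))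
    (p q : ι → ℝ) : tvDist p q ≤ c * tvDist (kernelMap O p) (kernelMap O q) := by
  have h := sum_abs_le_mul_sum_abs_kernelMap hO_nonneg hO_sum hc hdiag (p - q)
  rw [kernelMap_sub] at h
  unfold tvDist
  rw [mul_left_comm]
  exact mul_le_mul_of_nonneg_left h (by norm_num)

end DiagDominant

open DiagDominant in
theorem stmt14_general {Ξ : Type*} [Fintype Ξ] [Nonempty Ξ]
    (O : Ξ → Ξ → ℝ)  -- `O ξ' ξ` denotes O(ξ'|ξ)
    (hO_nonneg : ∀ ξ' ξ, 0 ≤ O ξ' ξ)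
    (hO_sum : ∀ ξ, ∑ ξ', O ξ' ξ = 1)
    (hdd : ∀ ξ ξ₁ ξ₂, ξ₁ ≠ ξ₂ → (Fintype.card Ξ : ℝ) * O ξ₂ ξ₁ < O ξ ξ)
    (P : Ξ → ℝ)
    (ε : ℕ → ℝ) (hε0 : Filter.Tendsto ε Filter.atTop (nhds 0))
    (Phat : ℕ → Ξ → ℝ)
    -- P̂'_N → P' = O⋆P in total variation
    (hPhat : Filter.Tendsto
      (fun N => (1/2) * ∑ ξ', |Phat N ξ' - ∑ ξ, O ξ' ξ * P ξ|)
      Filter.atTop (nhds 0))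
    (Q : ℕ → Ξ → ℝ)
    (hQ_ball : ∀ N, (1/2) * ∑ ξ', |(∑ ξ, O ξ' ξ * Q N ξ) - Phat N ξ'| ≤ ε N) :
    Filter.Tendsto (fun N => (1/2) * ∑ ξ, |Q N ξ - P ξ|) Filter.atTop (nhds 0) := by
  set c : ℝ := 2 * Fintype.card Ξ - 1
  have hc : 0 ≤ c := by
    have : (1 : ℝ) ≤ Fintype.card Ξ := by exact_mod_cast Fintype.card_pos
    linarith
  have hdiag : ∀ ξ, 1 ≤ c * (2 * O ξ ξ - 1) := fun ξ => by
    have := card_le_mul_diag (hO_sum ξ) fun ξ' hne => (hdd ξ ξ ξ' hne.symm).le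
    linarith
  have hbound : ∀ N, tvDist (Q N) P ≤ c * (ε N + tvDist (Phat N) (kernelMap O P)) := fun N =>
    (tvDist_le_mul_tvDist_kernelMap hO_nonneg hO_sum hc hdiag (Q N) P).trans <|
      mul_le_mul_of_nonneg_left
        ((tvDist_triangle _ (Phat N) _).trans (add_le_add_left (hQ_ball N) _)) hc
  have hlim := (hε0.add hPhat).const_mul c
  rw [add_zero, mul_zero] at hlim
  exact squeeze_zero (fun N => tvDist_nonneg _ _) hbound hlim

/-- shrinking ambiguity sets collapse to the singleton {P}. -/
theorem stmt14 {Ξ : Type*} [Fintype Ξ] [DecidableEq Ξ] [Nonempty Ξ]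
    (O : Ξ → Ξ → ℝ)  -- `O ξ' ξ` denotes O(ξ'|ξ)
    (hO_nonneg : ∀ ξ' ξ, 0 ≤ O ξ' ξ)
    (hO_sum : ∀ ξ, ∑ ξ', O ξ' ξ = 1)
    (hdd : ∀ ξ ξ₁ ξ₂, ξ₁ ≠ ξ₂ → (Fintype.card Ξ : ℝ) * O ξ₂ ξ₁ < O ξ ξ)
    (P : Ξ → ℝ) (hP_nonneg : ∀ ξ, 0 ≤ P ξ) (hP_sum : ∑ ξ, P ξ = 1)
    (ε : ℕ → ℝ) (hε0 : Filter.Tendsto ε Filter.atTop (nhds 0))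
    (Phat : ℕ → Ξ → ℝ)
    -- P̂'_N → P' = O⋆P in total variation
    (hPhat : Filter.Tendsto
      (fun N => (1/2) * ∑ ξ', |Phat N ξ' - ∑ ξ, O ξ' ξ * P ξ|)
      Filter.atTop (nhds 0))
    (Q : ℕ → Ξ → ℝ)
    (hQ_nonneg : ∀ N ξ, 0 ≤ Q N ξ) (hQ_sum : ∀ N, ∑ ξ, Q N ξ = 1)
    (hQ_ball : ∀ N, (1/2) * ∑ ξ', |(∑ ξ, O ξ' ξ * Q N ξ) - Phat N ξ'| ≤ ε N) :
    Filter.Tendsto (fun N => (1/2) * ∑ ξ, |Q N ξ - P ξ|) Filter.atTop (nhds 0) :=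
  stmt14_general O hO_nonneg hO_sum hdd P ε hε0 Phat hPhat Q hQ_ball
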